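/- Let θ = (θ_1, …, θ_p) with each θ_l ≥ 0, let γ_θ be the anisotropic Gaussian kernel, and let F be any Borel probability measure on ℝ^p. Then for every n ≥ 1 there exist points x_1, …, x_n ∈ ℝ^p whose empirical measure F_n satisfies D_{γ_θ}(F, F_n) ≤ n^{−1/2}. Consequently, any n-point set minimizing D_{γ_θ}(F, F_n) over all n-point configurations (a set of θ-weighted projected support points) achieves D_{γ_θ}(F, F_n) ≤ n^{−1/2}. -/
import Mathlib


open MeasureTheory

/-- The anisotropic Gaussian kernel `γ_θ(x,y) = exp(-∑_l θ_l (x_l - y_l)²)` on `ℝ^p`. -/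
noncomputable def gaussKer {p : ℕ} (θ : Fin p → ℝ) (x y : Fin p → ℝ) : ℝ :=
  Real.exp (-∑ l, θ l * (x l - y l) ^ 2)

lemma gaussKer_nonneg {p : ℕ} (θ : Fin p → ℝ) (x y : Fin p → ℝ) : 0 ≤ gaussKer θ x y :=
  (Real.exp_pos _).le

lemma gaussKer_le_one {p : ℕ} {θ : Fin p → ℝ} (hθ : ∀ l, 0 ≤ θ l) (x y : Fin p → ℝ) :
    gaussKer θ x y ≤ 1 := by
  rw [gaussKer, Real.exp_le_one_iff, neg_nonpos]
  exact Finset.sum_nonneg fun l _ => mul_nonneg (hθ l) (sq_nonneg _)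

lemma gaussKer_self {p : ℕ} (θ : Fin p → ℝ) (x : Fin p → ℝ) : gaussKer θ x x = 1 := by
  simp [gaussKer]

lemma gaussKer_cont {p : ℕ} (θ : Fin p → ℝ) :
    Continuous fun q : (Fin p → ℝ) × (Fin p → ℝ) => gaussKer θ q.1 q.2 := by
  unfold gaussKer; fun_prop

noncomputable def gMean {p : ℕ} (θ : Fin p → ℝ) (F : Measure (Fin p → ℝ))
    (y : Fin p → ℝ) : ℝ := ∫ y', gaussKer θ y y' ∂F

lemma gMean_cont {p : ℕ} {θ : Fin p → ℝ} (hθ : ∀ l, 0 ≤ θ l) (F : Measure (Fin p → ℝ))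
    [IsProbabilityMeasure F] : Continuous (gMean θ F) := by
  refine continuous_of_dominated (bound := fun _ => (1 : ℝ)) ?_ ?_ (integrable_const 1) ?_
  · intro y
    exact ((gaussKer_cont θ).comp (Continuous.prodMk_right y)).aestronglyMeasurable
  · intro y
    filter_upwards with y'
    rw [Real.norm_eq_abs, abs_of_nonneg (gaussKer_nonneg θ y y')]
    exact gaussKer_le_one hθ y y'
  · filter_upwards with y'
    have h : Continuous fun y : Fin p → ℝ => gaussKer θ y y' := by unfold gaussKer; fun_prop
    exact h

lemma gMean_nonneg {p : ℕ} (θ : Fin p → ℝ) (F : Measure (Fin p → ℝ)) (y : Fin p → ℝ) :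
    0 ≤ gMean θ F y := integral_nonneg fun y' => gaussKer_nonneg θ y y'

lemma gMean_le_one {p : ℕ} {θ : Fin p → ℝ} (hθ : ∀ l, 0 ≤ θ l) (F : Measure (Fin p → ℝ))
    [IsProbabilityMeasure F] (y : Fin p → ℝ) : |gMean θ F y| ≤ 1 := by
  have := norm_integral_le_of_norm_le_const (μ := F) (C := 1)
    (f := fun y' => gaussKer θ y y') (ae_of_all _ fun y' => by
      rw [Real.norm_eq_abs, abs_of_nonneg (gaussKer_nonneg θ y y')]
      exact gaussKer_le_one hθ y y')
  simpa [gMean] using this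
lemma map_eval_pi {p n : ℕ} (F : Measure (Fin p → ℝ)) [IsProbabilityMeasure F] (i : Fin n) :
    (Measure.pi fun _ : Fin n => F).map (fun x => x i) = F := by
  ext s hs
  rw [Measure.map_apply (measurable_pi_apply i) hs]
  have h : (fun x : Fin n → (Fin p → ℝ) => x i) ⁻¹' s
      = Set.pi Set.univ (Function.update (fun _ => Set.univ) i s) := by
    ext x
    simp [Function.update_apply]
  rw [h, Measure.pi_pi]
  rw [Finset.prod_eq_single i (fun b _ hb => by simp [Function.update_apply, hb])
    (fun h => absurd (Finset.mem_univ i) h)]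
  simp

lemma map_evalPair_pi {p n : ℕ} (F : Measure (Fin p → ℝ)) [IsProbabilityMeasure F]
    {i j : Fin n} (hij : i ≠ j) :
    (Measure.pi fun _ : Fin n => F).map (fun x => (x i, x j)) = F.prod F := by
  refine (Measure.prod_eq fun s t hs ht => ?_).symm
  rw [Measure.map_apply ((measurable_pi_apply i).prodMk (measurable_pi_apply j)) (hs.prod ht)]
  have h : (fun x : Fin n → (Fin p → ℝ) => (x i, x j)) ⁻¹' (s ×ˢ t)
      = Set.pi Set.univ (Function.update (Function.update (fun _ => Set.univ) i s) j t) := by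
    ext x
    simp only [Set.mem_preimage, Set.mem_prod, Set.mem_pi, Set.mem_univ, forall_true_left,
      Function.update_apply]
    constructor
    · rintro ⟨h1, h2⟩ k
      split_ifs with hkj hki
      · exact hkj ▸ h2
      · exact hki ▸ h1
      · trivial
    · intro h
      refine ⟨?_, ?_⟩
      · have := h i; simpa [hij] using this
      · have := h j; simpa using this
  rw [h, Measure.pi_pi]
  rw [← Finset.mul_prod_erase _ _ (Finset.mem_univ j)]
  rw [← Finset.mul_prod_erase _ _ (Finset.mem_erase.mpr ⟨hij, Finset.mem_univ i⟩)]
  rw [Finset.prod_eq_one (fun k hk => ?_)]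
  · simp [Function.update_apply, hij, mul_comm]
  · rcases Finset.mem_erase.mp hk with ⟨hki, hk2⟩
    rcases Finset.mem_erase.mp hk2 with ⟨hkj, _⟩
    simp [Function.update_apply, hki, hkj]

/-- The squared kernel discrepancy
`D_γ(F, F_n)² = ∫∫ γ d(F-F_n) d(F-F_n)`, expanded as
`∫∫ γ dF dF - (2/n) ∑_i ∫ γ(x_i, y) dF(y) + (1/n²) ∑_i ∑_j γ(x_i, x_j)`
for a symmetric kernel `γ`, where `F_n` is the empirical measure of `x_1, …, x_n`. -/
noncomputable def sqDiscrepancy {p : ℕ} (γ : (Fin p → ℝ) → (Fin p → ℝ) → ℝ)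
    (F : Measure (Fin p → ℝ)) (n : ℕ) (x : Fin n → (Fin p → ℝ)) : ℝ :=
  (∫ y, ∫ y', γ y y' ∂F ∂F) - (2 / (n : ℝ)) * ∑ i, ∫ y, γ (x i) y ∂F
    + (1 / (n : ℝ) ^ 2) * ∑ i, ∑ j, γ (x i) (x j)

lemma exists_sqDiscrepancy_le {p : ℕ} (n : ℕ) (hn : 1 ≤ n) {θ : Fin p → ℝ}
    (hθ : ∀ l, 0 ≤ θ l) (F : Measure (Fin p → ℝ)) [IsProbabilityMeasure F] :
    ∃ x : Fin n → (Fin p → ℝ), sqDiscrepancy (gaussKer θ) F n x ≤ 1 / (n : ℝ) := by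
  have hnR : (1 : ℝ) ≤ (n : ℝ) := by exact_mod_cast hn
  have hn0 : (0 : ℝ) < (n : ℝ) := by linarith
  set C : ℝ := ∫ y, gMean θ F y ∂F with hCdef
  have hC0 : (0:ℝ) ≤ C := integral_nonneg fun y => gMean_nonneg θ F y
  set P : Measure (Fin n → (Fin p → ℝ)) := Measure.pi fun _ : Fin n => F with hPdef
  have hker_meas : AEStronglyMeasurable (fun z : (Fin p → ℝ) × (Fin p → ℝ) =>
      gaussKer θ z.1 z.2) (F.prod F) := (gaussKer_cont θ).aestronglyMeasurable
  have hker_int : Integrable (fun z : (Fin p → ℝ) × (Fin p → ℝ) =>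
      gaussKer θ z.1 z.2) (F.prod F) := by
    refine (integrable_const 1).mono' hker_meas (ae_of_all _ fun z => ?_)
    rw [Real.norm_eq_abs, abs_of_nonneg (gaussKer_nonneg θ _ _)]
    exact gaussKer_le_one hθ _ _
  have hCprod : C = ∫ z : (Fin p → ℝ) × (Fin p → ℝ), gaussKer θ z.1 z.2 ∂(F.prod F) := by
    rw [hCdef]
    exact (integral_prod _ hker_int).symm
  have hEval : ∀ i : Fin n, ∫ x, gMean θ F (x i) ∂P = C := by
    intro i
    have h1 := integral_map (μ := P) (φ := fun x => x i) (f := gMean θ F)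
      (measurable_pi_apply i).aemeasurable
      ((map_eval_pi F i).symm ▸ (gMean_cont hθ F).aestronglyMeasurable)
    rw [map_eval_pi F i] at h1
    rw [hCdef]
    exact h1.symm
  have hPair : ∀ i j : Fin n, i ≠ j → ∫ x, gaussKer θ (x i) (x j) ∂P = C := by
    intro i j hij
    have h1 := integral_map (μ := P) (φ := fun x => (x i, x j))
      (f := fun z : (Fin p → ℝ) × (Fin p → ℝ) => gaussKer θ z.1 z.2)
      ((measurable_pi_apply i).prodMk (measurable_pi_apply j)).aemeasurable
      ((map_evalPair_pi F hij).symm ▸ hker_meas)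
    rw [map_evalPair_pi F hij] at h1
    exact h1.symm.trans hCprod.symm
  have hPg : ∀ i : Fin n, Integrable (fun x => gMean θ F (x i)) P := by
    intro i
    refine (integrable_const 1).mono'
      (((gMean_cont hθ F).comp (continuous_apply i)).aestronglyMeasurable)
      (ae_of_all _ fun x => ?_)
    rw [Real.norm_eq_abs]; exact gMean_le_one hθ F _
  have hPk : ∀ i j : Fin n, Integrable (fun x => gaussKer θ (x i) (x j)) P := by
    intro i j
    have hc : Continuous fun x : Fin n → (Fin p → ℝ) => gaussKer θ (x i) (x j) := by
      unfold gaussKer; fun_prop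
    refine (integrable_const 1).mono' hc.aestronglyMeasurable (ae_of_all _ fun x => ?_)
    rw [Real.norm_eq_abs, abs_of_nonneg (gaussKer_nonneg θ _ _)]
    exact gaussKer_le_one hθ _ _
  have hS1int : Integrable (fun x => ∑ i, gMean θ F (x i)) P :=
    integrable_finset_sum _ fun i _ => hPg i
  have hS2int : Integrable (fun x => ∑ i, ∑ j, gaussKer θ (x i) (x j)) P :=
    integrable_finset_sum _ fun i _ => integrable_finset_sum _ fun j _ => hPk i j
  have hIS1 : ∫ x, (∑ i, gMean θ F (x i)) ∂P = (n : ℝ) * C := by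
    rw [integral_finset_sum _ fun i _ => hPg i]
    simp [hEval, Finset.sum_const, nsmul_eq_mul]
  have hIS2 : ∫ x, (∑ i, ∑ j, gaussKer θ (x i) (x j)) ∂P
      = (n : ℝ) + ((n : ℝ) ^ 2 - (n : ℝ)) * C := by
    rw [integral_finset_sum _ fun i _ => integrable_finset_sum _ fun j _ => hPk i j]
    have step : ∀ i : Fin n, ∫ x, (∑ j, gaussKer θ (x i) (x j)) ∂P
        = ∑ j : Fin n, (if i = j then (1:ℝ) else C) := by
      intro i
      rw [integral_finset_sum _ fun j _ => hPk i j]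
      refine Finset.sum_congr rfl fun j _ => ?_
      by_cases hij : i = j
      · subst hij
        simp [gaussKer_self]
      · rw [if_neg hij]
        exact hPair i j hij
    have inner : ∀ i : Fin n, ∑ j : Fin n, (if i = j then (1:ℝ) else C)
        = (n : ℝ) * C + (1 - C) := by
      intro i
      have h : ∀ j : Fin n, (if i = j then (1:ℝ) else C)
          = C + (if i = j then (1 - C : ℝ) else 0) := by
        intro j; split_ifs <;> ring
      rw [Finset.sum_congr rfl fun j _ => h j, Finset.sum_add_distrib,
        Finset.sum_const, Finset.sum_ite_eq]
      simp [nsmul_eq_mul]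
    rw [Finset.sum_congr rfl fun i _ => (step i).trans (inner i), Finset.sum_const]
    simp only [Finset.card_univ, Fintype.card_fin, nsmul_eq_mul]
    ring
  have hexpand : (fun x : Fin n → (Fin p → ℝ) => sqDiscrepancy (gaussKer θ) F n x)
      = fun x => C - (2 / (n : ℝ)) * ∑ i, gMean θ F (x i)
          + (1 / (n : ℝ) ^ 2) * ∑ i, ∑ j, gaussKer θ (x i) (x j) := rfl
  have hInt_sq : Integrable (fun x => sqDiscrepancy (gaussKer θ) F n x) P := by
    rw [hexpand]
    exact ((integrable_const C).sub (hS1int.const_mul _)).add (hS2int.const_mul _)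
  have hIsq : ∫ x, sqDiscrepancy (gaussKer θ) F n x ∂P ≤ 1 / (n : ℝ) := by
    have e1 : ∫ x, sqDiscrepancy (gaussKer θ) F n x ∂P
        = (∫ x, (C - (2 / (n : ℝ)) * ∑ i, gMean θ F (x i)) ∂P)
          + ∫ x, ((1 / (n : ℝ) ^ 2) * ∑ i, ∑ j, gaussKer θ (x i) (x j)) ∂P := by
      rw [hexpand]
      exact integral_add ((integrable_const C).sub (hS1int.const_mul _)) (hS2int.const_mul _)
    have e2 : ∫ x, (C - (2 / (n : ℝ)) * ∑ i, gMean θ F (x i)) ∂P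
        = (∫ _x : Fin n → (Fin p → ℝ), C ∂P)
          - ∫ x, ((2 / (n : ℝ)) * ∑ i, gMean θ F (x i)) ∂P :=
      integral_sub (integrable_const C) (hS1int.const_mul _)
    have e3 : ∫ x, ((2 / (n : ℝ)) * ∑ i, gMean θ F (x i)) ∂P
        = (2 / (n : ℝ)) * ∫ x, (∑ i, gMean θ F (x i)) ∂P := integral_const_mul _ _
    have e4 : ∫ x, ((1 / (n : ℝ) ^ 2) * ∑ i, ∑ j, gaussKer θ (x i) (x j)) ∂P
        = (1 / (n : ℝ) ^ 2) * ∫ x, (∑ i, ∑ j, gaussKer θ (x i) (x j)) ∂P :=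
      integral_const_mul _ _
    have e5 : (∫ _x : Fin n → (Fin p → ℝ), C ∂P) = C := by simp
    rw [e1, e2, e3, e4, e5, hIS1, hIS2]
    have heq : C - (2 / (n:ℝ)) * ((n:ℝ) * C)
        + (1 / (n:ℝ) ^ 2) * ((n:ℝ) + ((n:ℝ) ^ 2 - (n:ℝ)) * C)
        = 1 / (n:ℝ) - C / (n:ℝ) := by
      field_simp
      ring
    rw [heq]
    have h0 : 0 ≤ C / (n:ℝ) := div_nonneg hC0 hn0.le
    linarith
  obtain ⟨x₀, hx₀⟩ := exists_le_integral hInt_sq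
  exact ⟨x₀, hx₀.trans hIsq⟩

/-- **Discrepancy bound for θ-weighted projected support points.**
For `θ_l ≥ 0`, the anisotropic Gaussian kernel `γ_θ`, and any Borel probability measure `F` on
`ℝ^p`: for every `n ≥ 1` there exist points `x_1, …, x_n` whose empirical measure `F_n`
satisfies `D_{γ_θ}(F, F_n) ≤ n^{-1/2}`; consequently, any `n`-point set minimizing
`D_{γ_θ}(F, F_n)` over all `n`-point configurations achieves `D_{γ_θ}(F, F_n) ≤ n^{-1/2}`. -/
theorem psp_discrepancy_bound (p n : ℕ) (hn : 1 ≤ n) (θ : Fin p → ℝ) (hθ : ∀ l, 0 ≤ θ l)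
    (F : Measure (Fin p → ℝ)) [IsProbabilityMeasure F] :
    (∃ x : Fin n → (Fin p → ℝ),
        Real.sqrt (sqDiscrepancy (gaussKer θ) F n x) ≤ ((n : ℝ)) ^ (-(1 / 2 : ℝ)))
    ∧ (∀ x : Fin n → (Fin p → ℝ),
        (∀ x' : Fin n → (Fin p → ℝ),
            sqDiscrepancy (gaussKer θ) F n x ≤ sqDiscrepancy (gaussKer θ) F n x') →
        Real.sqrt (sqDiscrepancy (gaussKer θ) F n x) ≤ ((n : ℝ)) ^ (-(1 / 2 : ℝ))) := by
  have hn0 : (0 : ℝ) < (n : ℝ) := by exact_mod_cast hn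
  obtain ⟨x₀, hx₀⟩ := exists_sqDiscrepancy_le n hn hθ F
  have conclude : ∀ x : Fin n → (Fin p → ℝ),
      sqDiscrepancy (gaussKer θ) F n x ≤ 1 / (n : ℝ) →
      Real.sqrt (sqDiscrepancy (gaussKer θ) F n x) ≤ ((n : ℝ)) ^ (-(1 / 2 : ℝ)) := by
    intro x hx
    have h1 : Real.sqrt (sqDiscrepancy (gaussKer θ) F n x) ≤ Real.sqrt (1 / (n:ℝ)) :=
      Real.sqrt_le_sqrt hx
    have h2 : Real.sqrt (1 / (n:ℝ)) = ((n : ℝ)) ^ (-(1 / 2 : ℝ)) := by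
      rw [one_div, Real.sqrt_inv, Real.rpow_neg (Nat.cast_nonneg n),
        Real.sqrt_eq_rpow]
    rw [← h2]
    exact h1
  exact ⟨⟨x₀, conclude x₀ hx₀⟩, fun x hmin => conclude x ((hmin x₀).trans hx₀)⟩
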